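/- Let Φ be a reduced irreducible root system spanning V which is simply-laced, i.e., the Weyl group W acts transitively on Φ. Then an element χ of the weight lattice P is quasi-constant if and only if χ is an integer multiple of a minuscule element of P. -/

import Mathlib

namespace QC

open Classical

variable {V : Type*} [AddCommGroup V] [Module ℚ V]

/-- The contragredient action of a linear automorphism `w` of `V` on the dual space,
characterized by `⟨w x, coact w f⟩ = ⟨x, f⟩`, i.e. `(coact w f) x = f (w⁻¹ x)`. -/
noncomputable def coact (w : V ≃ₗ[ℚ] V) (f : Module.Dual ℚ V) : Module.Dual ℚ V :=
  w.symm.dualMap f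

/-- The Weyl group of the data `(Φ, co)`: the subgroup of linear automorphisms of `V`
generated by the reflections `s_α : x ↦ x - ⟨x, α∨⟩ α` for `α ∈ Φ`. -/
def weylGroup (Φ : Set V) (co : V → Module.Dual ℚ V) : Subgroup (V ≃ₗ[ℚ] V) :=
  Subgroup.closure { w : V ≃ₗ[ℚ] V | ∃ α ∈ Φ, ∀ x : V, w x = x - (co α x) • α }

/-- `χ ∈ V` is quasi-constant with respect to a group `G` of automorphisms
(typically the Weyl group, or `W ⋊ Γ`). -/
def IsQuasiConstantWrt (Φ : Set V) (co : V → Module.Dual ℚ V)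
    (G : Subgroup (V ≃ₗ[ℚ] V)) (χ : V) : Prop :=
  ∀ α ∈ Φ, co α χ ≠ 0 → ∀ σ, σ ∈ G → coact σ (co α) χ / co α χ ∈ ({-1, 0, 1} : Set ℚ)

/-- `χ ∈ V` is quasi-constant (with respect to the Weyl group). -/
def IsQuasiConstant (Φ : Set V) (co : V → Module.Dual ℚ V) (χ : V) : Prop :=
  IsQuasiConstantWrt Φ co (weylGroup Φ co) χ

/-- A coweight `μ ∈ V∨` is quasi-constant with respect to a group `G`. -/
def IsQuasiConstantCowtWrt (Φ : Set V) (G : Subgroup (V ≃ₗ[ℚ] V))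
    (μ : Module.Dual ℚ V) : Prop :=
  ∀ α ∈ Φ, μ α ≠ 0 → ∀ σ, σ ∈ G → μ (σ α) / μ α ∈ ({-1, 0, 1} : Set ℚ)

/-- A coweight `μ ∈ V∨` is quasi-constant (with respect to the Weyl group). -/
def IsQuasiConstantCowt (Φ : Set V) (co : V → Module.Dual ℚ V)
    (μ : Module.Dual ℚ V) : Prop :=
  IsQuasiConstantCowtWrt Φ (weylGroup Φ co) μ

/-- `χ ∈ V` is minuscule: `⟨χ, α∨⟩ ∈ {-1,0,1}` for all roots `α`. -/
def IsMinuscule (Φ : Set V) (co : V → Module.Dual ℚ V) (χ : V) : Prop :=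
  ∀ α ∈ Φ, co α χ ∈ ({-1, 0, 1} : Set ℚ)

/-- `μ ∈ V∨` is minuscule: `⟨α, μ⟩ ∈ {-1,0,1}` for all roots `α`. -/
def IsMinusculeCowt (Φ : Set V) (μ : Module.Dual ℚ V) : Prop :=
  ∀ α ∈ Φ, μ α ∈ ({-1, 0, 1} : Set ℚ)

/-- The weight lattice `P = {χ ∈ V : ⟨χ, β∨⟩ ∈ ℤ for all β ∈ Φ}`. -/
def weightLattice (Φ : Set V) (co : V → Module.Dual ℚ V) : Set V :=
  { χ | ∀ β ∈ Φ, ∃ n : ℤ, co β χ = (n : ℚ) }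

/-- The coweight lattice `P∨ = {μ ∈ V∨ : ⟨α, μ⟩ ∈ ℤ for all α ∈ Φ}`. -/
def coweightLattice (Φ : Set V) : Set (Module.Dual ℚ V) :=
  { μ | ∀ α ∈ Φ, ∃ n : ℤ, μ α = (n : ℚ) }

/-- `(Φ, co)` is a reduced root system (not necessarily spanning) in `V`, where
`co α` is the coroot `α∨` viewed as a linear functional, with the Weyl group acting
compatibly on roots and coroots. -/
structure IsRootSystem (Φ : Set V) (co : V → Module.Dual ℚ V) : Prop where
  finite : Φ.Finite
  ne_zero : ∀ α ∈ Φ, α ≠ 0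
  pair_self : ∀ α ∈ Φ, co α α = 2
  refl_mem : ∀ α ∈ Φ, ∀ β ∈ Φ, β - (co α β) • α ∈ Φ
  pair_int : ∀ α ∈ Φ, ∀ β ∈ Φ, ∃ n : ℤ, co α β = (n : ℚ)
  reduced : ∀ α ∈ Φ, ∀ c : ℚ, c • α ∈ Φ → c = 1 ∨ c = -1
  weyl_root : ∀ w, w ∈ weylGroup Φ co → ∀ α ∈ Φ, w α ∈ Φ
  weyl_coroot : ∀ w, w ∈ weylGroup Φ co → ∀ α ∈ Φ, co (w α) = coact w (co α)

/-- `Φ` is irreducible: it is nonempty and admits no nontrivial orthogonal decomposition. -/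
def IsIrreducible (Φ : Set V) (co : V → Module.Dual ℚ V) : Prop :=
  Φ.Nonempty ∧ ∀ Ψ ⊆ Φ, (∀ α ∈ Ψ, ∀ β ∈ Φ \ Ψ, co α β = 0) → Ψ = ∅ ∨ Ψ = Φ

/-- `Δ` is a base (set of simple roots) of `Φ`. -/
structure IsBase (Φ : Set V) (co : V → Module.Dual ℚ V) (Δ : Set V) : Prop where
  subset : Δ ⊆ Φ
  indep : LinearIndependent ℚ ((↑) : Δ → V)
  span_eq : Submodule.span ℚ Δ = Submodule.span ℚ Φ
  decomp : ∀ α ∈ Φ, ∃ c : V →₀ ℕ, ↑c.support ⊆ Δ ∧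
      (α = c.sum (fun v n => (n : ℚ) • v) ∨ α = - c.sum (fun v n => (n : ℚ) • v))

/-- `η` is the fundamental weight `η(α)` for the simple root `α ∈ Δ`:
`⟨η, β∨⟩ = δ_{αβ}` for `β ∈ Δ`. -/
def IsFundWeight (co : V → Module.Dual ℚ V) (Δ : Set V) (α : V) (η : V) : Prop :=
  ∀ β ∈ Δ, co β η = if β = α then 1 else 0

/-- `f` is the fundamental coweight `η(α∨)` for the simple root `α ∈ Δ`:
`⟨β, f⟩ = δ_{αβ}` for `β ∈ Δ`. -/
def IsFundCoweight (Δ : Set V) (α : V) (f : Module.Dual ℚ V) : Prop :=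
  ∀ β ∈ Δ, f β = if β = α then 1 else 0

/-- `χ` is cominuscule: `χ = η(α)` for some base `Δ` and `α ∈ Δ` such that the
fundamental coweight `η(α∨)` is minuscule. -/
def IsCominuscule (Φ : Set V) (co : V → Module.Dual ℚ V) (χ : V) : Prop :=
  χ ∈ Submodule.span ℚ Φ ∧
  ∃ Δ : Set V, IsBase Φ co Δ ∧ ∃ α ∈ Δ, IsFundWeight co Δ α χ ∧
    ∀ f : Module.Dual ℚ V, IsFundCoweight Δ α f → IsMinusculeCowt Φ f

/-- `μ` is a cominuscule coweight: `μ = η(α∨)` for some base `Δ` and `α ∈ Δ` such that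
the fundamental weight `η(α)` is minuscule. -/
def IsCominusculeCowt (Φ : Set V) (co : V → Module.Dual ℚ V)
    (μ : Module.Dual ℚ V) : Prop :=
  ∃ Δ : Set V, IsBase Φ co Δ ∧ ∃ α ∈ Δ, IsFundCoweight Δ α μ ∧
    ∀ η : V, IsFundWeight co Δ α η → IsMinuscule Φ co η

/-- `χ` is `Δ`-dominant. -/
def IsDominant (co : V → Module.Dual ℚ V) (Δ : Set V) (χ : V) : Prop :=
  ∀ α ∈ Δ, 0 ≤ co α χ

/-- `μ ∈ V∨` is `Δ`-dominant. -/
def IsDominantCowt (Δ : Set V) (μ : Module.Dual ℚ V) : Prop :=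
  ∀ α ∈ Δ, 0 ≤ μ α

/-- `χ` is orbitally `p`-close. -/
def IsOrbitallyPClose (Φ : Set V) (co : V → Module.Dual ℚ V) (p : ℕ) (χ : V) : Prop :=
  ∀ α ∈ Φ, co α χ ≠ 0 → ∀ w, w ∈ weylGroup Φ co →
    |coact w (co α) χ / co α χ| ≤ (p : ℚ) - 1

end QC

/-- simply-laced case of Theorem 1.4. Let `Φ` be a reduced irreducible
root system spanning `V` which is simply-laced, i.e. the Weyl group acts transitively on
`Φ`. Then `χ` in the weight lattice `P` is quasi-constant if and only if `χ` is an
integer multiple of a minuscule element of `P`. -/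
theorem statement2 {V : Type*} [AddCommGroup V] [Module ℚ V] [FiniteDimensional ℚ V]
    (Φ : Set V) (co : V → Module.Dual ℚ V)
    (hRS : QC.IsRootSystem Φ co) (hirr : QC.IsIrreducible Φ co)
    (hspan : Submodule.span ℚ Φ = ⊤)
    (hSL : ∀ α ∈ Φ, ∀ β ∈ Φ, ∃ w, w ∈ QC.weylGroup Φ co ∧ w α = β)
    (χ : V) (hχ : χ ∈ QC.weightLattice Φ co) :
    QC.IsQuasiConstant Φ co χ ↔
      ∃ (m : ℤ) (χ₀ : V), χ₀ ∈ QC.weightLattice Φ co ∧ QC.IsMinuscule Φ co χ₀ ∧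
        χ = (m : ℚ) • χ₀ := by
  have memset : ∀ x : ℚ, x ∈ ({-1, 0, 1} : Set ℚ) ↔ (x = -1 ∨ x = 0 ∨ x = 1) := by
    intro x; simp [Set.mem_insert_iff]
  constructor
  · intro hqc
    by_cases h : ∃ α ∈ Φ, co α χ ≠ 0
    · obtain ⟨α, hα, hne⟩ := h
      obtain ⟨m, hm⟩ := hχ α hα
      have hm0 : (m : ℚ) ≠ 0 := hm ▸ hne
      have key : ∀ β ∈ Φ, co β χ = -(m : ℚ) ∨ co β χ = 0 ∨ co β χ = (m : ℚ) := by
        intro β hβ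
        obtain ⟨w, hw, hwα⟩ := hSL α hα β hβ
        have h1 := hqc α hα hne w hw
        rw [← hRS.weyl_coroot w hw α hα, hwα, hm, memset] at h1
        rcases h1 with h1 | h1 | h1
        · left; rw [div_eq_iff hm0] at h1; linarith
        · right; left; rcases (div_eq_zero_iff).mp h1 with h2 | h2
          · exact h2
          · exact absurd h2 hm0
        · right; right; rw [div_eq_iff hm0] at h1; linarith
      have hval : ∀ β ∈ Φ, co β ((m : ℚ)⁻¹ • χ) = (m : ℚ)⁻¹ * co β χ := by
        intro β hβ; simp
      refine ⟨m, (m : ℚ)⁻¹ • χ, ?_, ?_, ?_⟩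
      · intro β hβ
        rcases key β hβ with hk | hk | hk
        · exact ⟨-1, by rw [hval β hβ, hk]; field_simp; norm_num⟩
        · exact ⟨0, by rw [hval β hβ, hk]; simp⟩
        · exact ⟨1, by rw [hval β hβ, hk]; field_simp; norm_num⟩
      · intro β hβ
        rw [memset, hval β hβ]
        rcases key β hβ with hk | hk | hk
        · left; rw [hk]; field_simp
        · right; left; rw [hk]; simp
        · right; right; rw [hk]; field_simp
      · rw [smul_smul, mul_inv_cancel₀ hm0, one_smul]
    · push_neg at h
      refine ⟨1, χ, hχ, ?_, by simp⟩
      intro β hβ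
      rw [memset, h β hβ]
      tauto
  · rintro ⟨m, χ₀, hP, hmin, rfl⟩
    intro α hα hne σ hσ
    have hσα : σ α ∈ Φ := hRS.weyl_root σ hσ α hα
    rw [← hRS.weyl_coroot σ hσ α hα]
    have e1 : co (σ α) ((m : ℚ) • χ₀) = (m : ℚ) * co (σ α) χ₀ := by simp
    have e2 : co α ((m : ℚ) • χ₀) = (m : ℚ) * co α χ₀ := by simp
    have hm0 : (m : ℚ) ≠ 0 := by
      intro hm; apply hne; rw [e2, hm, zero_mul]
    have h0 : co α χ₀ ≠ 0 := by
      intro hz; apply hne; rw [e2, hz, mul_zero]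
    rw [e1, e2, mul_div_mul_left _ _ hm0, memset]
    have h1 := (memset _).mp (hmin (σ α) hσα)
    have h2 := (memset _).mp (hmin α hα)
    rcases h1 with h1 | h1 | h1 <;> rcases h2 with h2 | h2 | h2 <;>
      simp_all <;> norm_num
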